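/- If F is a nontrivial finite group, then the trivial ℤF-module ℤ does not admit a finite-length resolution by projective ℤF-modules; equivalently, F has infinite cohomological dimension over ℤ. -/

import Mathlib

/-- `HasProjResLen R n M` says that the `R`-module `M` admits a resolution
`0 → P_n → ⋯ → P_0 → M → 0` of length `n` by projective `R`-modules. -/
def HasProjResLen (R : Type) [Ring R] : ℕ → (M : Type) → [AddCommGroup M] → [Module R M] → Prop
  | 0, M, _, _ => Module.Projective R M
  | n + 1, M, _, _ =>
      ∃ (P : ModuleCat.{0} R), Module.Projective R P ∧
        ∃ f : P →ₗ[R] M, Function.Surjective f ∧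
          HasProjResLen R n (LinearMap.ker f)

/-- `ℤ` with the trivial action of `F`, as a module over the group ring `ℤF`. -/
def TrivZ (F : Type) [Group F] : Type := ℤ

instance (F : Type) [Group F] : AddCommGroup (TrivZ F) :=
  inferInstanceAs (AddCommGroup ℤ)

/-- The `ℤF`-module structure on `ℤ` coming from the augmentation
`ℤF → ℤ` (induced by the trivial homomorphism `F →* ℤ`). -/
noncomputable instance (F : Type) [Group F] : Module (MonoidAlgebra ℤ F) (TrivZ F) :=
  Module.compHom ℤ ((MonoidAlgebra.lift ℤ ℤ F) 1).toRingHom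

section TateAux
variable {R : Type} [Ring R]

/-- Two-periodic "Tate" acyclicity with respect to ring elements `t`, `N`. -/
def IsAcyc (t N : R) (M : Type) [AddCommGroup M] [Module R M] : Prop :=
  (∀ m : M, t • m = 0 → ∃ y : M, m = N • y) ∧
  (∀ m : M, N • m = 0 → ∃ y : M, m = t • y)

lemma isAcyc_finsupp (t N : R)
    (hR1 : ∀ a : R, t * a = 0 → ∃ b, a = N * b)
    (hR2 : ∀ a : R, N * a = 0 → ∃ b, a = t * b) (M : Type) :
    IsAcyc t N (M →₀ R) := by
  constructor
  · intro f hf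
    have hcoord : ∀ x : M, t * f x = 0 := by
      intro x
      have := DFunLike.congr_fun hf x
      simpa [Finsupp.smul_apply, smul_eq_mul] using this
    choose g hg using fun x => hR1 (f x) (hcoord x)
    refine ⟨∑ x ∈ f.support, Finsupp.single x (g x), ?_⟩
    rw [Finset.smul_sum]
    simp only [Finsupp.smul_single, smul_eq_mul, ← hg]
    exact (Finsupp.sum_single f).symm
  · intro f hf
    have hcoord : ∀ x : M, N * f x = 0 := by
      intro x
      have := DFunLike.congr_fun hf x
      simpa [Finsupp.smul_apply, smul_eq_mul] using this
    choose g hg using fun x => hR2 (f x) (hcoord x)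
    refine ⟨∑ x ∈ f.support, Finsupp.single x (g x), ?_⟩
    rw [Finset.smul_sum]
    simp only [Finsupp.smul_single, smul_eq_mul, ← hg]
    exact (Finsupp.sum_single f).symm

lemma isAcyc_of_projective (t N : R)
    (hR1 : ∀ a : R, t * a = 0 → ∃ b, a = N * b)
    (hR2 : ∀ a : R, N * a = 0 → ∃ b, a = t * b)
    (M : Type) [AddCommGroup M] [Module R M]
    (hM : Module.Projective R M) : IsAcyc t N M := by
  obtain ⟨s, hs⟩ := Module.projective_def.mp hM
  obtain ⟨h1, h2⟩ := isAcyc_finsupp t N hR1 hR2 M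
  constructor
  · intro m hm
    obtain ⟨v, hv⟩ := h1 (s m) (by rw [← map_smul, hm, map_zero])
    refine ⟨Finsupp.linearCombination R id v, ?_⟩
    conv_lhs => rw [← hs m, hv]
    exact map_smul _ _ _
  · intro m hm
    obtain ⟨v, hv⟩ := h2 (s m) (by rw [← map_smul, hm, map_zero])
    refine ⟨Finsupp.linearCombination R id v, ?_⟩
    conv_lhs => rw [← hs m, hv]
    exact map_smul _ _ _

lemma isAcyc_of_surjective {t N : R} (htN : t * N = 0) (hNt : N * t = 0)
    {P M : Type} [AddCommGroup P] [Module R P] [AddCommGroup M] [Module R M]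
    (f : P →ₗ[R] M) (hf : Function.Surjective f)
    (hP : IsAcyc t N P) (hK : IsAcyc t N (LinearMap.ker f)) : IsAcyc t N M := by
  constructor
  · intro m hm
    obtain ⟨x, rfl⟩ := hf m
    have hx : t • x ∈ LinearMap.ker f := by
      rw [LinearMap.mem_ker, map_smul, hm]
    obtain ⟨y, hy⟩ := hK.2 ⟨t • x, hx⟩ (Subtype.ext (by
      simp [smul_smul, hNt]))
    have hy' : t • x = t • (y : P) := congrArg Subtype.val hy
    have hxy : t • (x - (y : P)) = 0 := by rw [smul_sub, hy', sub_self]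
    obtain ⟨z, hz⟩ := hP.1 _ hxy
    refine ⟨f z, ?_⟩
    calc f x = f (x - (y : P)) := by rw [map_sub, LinearMap.mem_ker.mp y.2, sub_zero]
    _ = N • f z := by rw [hz, map_smul]
  · intro m hm
    obtain ⟨x, rfl⟩ := hf m
    have hx : N • x ∈ LinearMap.ker f := by
      rw [LinearMap.mem_ker, map_smul, hm]
    obtain ⟨y, hy⟩ := hK.1 ⟨N • x, hx⟩ (Subtype.ext (by
      simp [smul_smul, htN]))
    have hy' : N • x = N • (y : P) := congrArg Subtype.val hy
    have hxy : N • (x - (y : P)) = 0 := by rw [smul_sub, hy', sub_self]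
    obtain ⟨z, hz⟩ := hP.2 _ hxy
    refine ⟨f z, ?_⟩
    calc f x = f (x - (y : P)) := by rw [map_sub, LinearMap.mem_ker.mp y.2, sub_zero]
    _ = t • f z := by rw [hz, map_smul]

end TateAux

section GroupRing
variable {F : Type} [Group F]

/-- A representative of the orbit of `x` under left multiplication by powers of `σ`. -/
noncomputable def orbRep (σ : F) (x : F) : F :=
  (Quotient.mk'' x : Quotient (QuotientGroup.rightRel (Subgroup.zpowers σ))).out

lemma orbRep_spec (σ x : F) : ∃ i : ℤ, x = σ ^ i * orbRep σ x := by
  have h := Quotient.exact'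
    ((Quotient.mk'' x : Quotient (QuotientGroup.rightRel (Subgroup.zpowers σ))).out_eq')
  rw [QuotientGroup.rightRel_apply] at h
  obtain ⟨i, hi⟩ := Subgroup.mem_zpowers_iff.mp h
  refine ⟨i, ?_⟩
  unfold orbRep
  rw [hi]
  group

lemma orbRep_zpow (σ : F) (k : ℤ) (x : F) : orbRep σ (σ ^ k * x) = orbRep σ x := by
  unfold orbRep
  congr 1
  refine Quotient.sound' (QuotientGroup.rightRel_apply.mpr ?_)
  refine Subgroup.mem_zpowers_iff.mpr ⟨-k, ?_⟩
  group

variable [Fintype F] {σ : F} {p : ℕ}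

lemma orb_exists (hp : p.Prime) (hσ : orderOf σ = p) (x : F) :
    ∃ j : ℕ, j < p ∧ x = σ ^ j * orbRep σ x := by
  obtain ⟨i, hi⟩ := orbRep_spec σ x
  have h0 : (0:ℤ) < (p:ℤ) := by exact_mod_cast hp.pos
  have h1 := Int.emod_lt_of_pos i h0
  have h2 := Int.emod_nonneg i h0.ne'
  have hppos := hp.pos
  refine ⟨(i % (p:ℤ)).toNat, by omega, ?_⟩
  have hpow : σ ^ ((i % (p:ℤ)).toNat) = σ ^ i := by
    rw [← zpow_natCast, Int.toNat_of_nonneg h2, ← hσ, zpow_mod_orderOf]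
  rw [hpow]
  exact hi

lemma pow_uniq (hσ : orderOf σ = p) {i j : ℕ} (hi : i < p) (hj : j < p)
    (h : σ ^ i = σ ^ j) : i = j :=
  pow_injOn_Iio_orderOf (by simpa [hσ] using hi) (by simpa [hσ] using hj) h

lemma ringL1 (hp : p.Prime) (hσ : orderOf σ = p)
    (a : MonoidAlgebra ℤ F) (ht : (MonoidAlgebra.single σ (1:ℤ) - 1) * a = 0) :
    ∃ b, a = (∑ i ∈ Finset.range p, MonoidAlgebra.single (σ ^ i) (1:ℤ)) * b := by
  classical
  have ht' : MonoidAlgebra.single σ (1:ℤ) * a = a := by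
    rwa [sub_mul, one_mul, sub_eq_zero] at ht
  have ha : ∀ x : F, a.coeff (σ⁻¹ * x) = a.coeff x := by
    intro x
    have := Finsupp.ext_iff.mp (MonoidAlgebra.coeff_inj.mpr ht') x
    simpa [MonoidAlgebra.single_mul_apply] using this
  have haiter : ∀ (i : ℕ) (x : F), a.coeff ((σ ^ i)⁻¹ * x) = a.coeff x := by
    intro i
    induction i with
    | zero => simp
    | succ n ih =>
      intro x
      rw [pow_succ, mul_inv_rev, mul_assoc]
      exact (ha _).trans (ih x)
  choose j hjlt hjspec using orb_exists hp hσ (σ := σ)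
  set b : MonoidAlgebra ℤ F :=
    MonoidAlgebra.ofCoeff (Finsupp.equivFunOnFinite.symm (fun x => if x = orbRep σ x then a.coeff x else 0)) with hb
  have hbapp : ∀ z, b.coeff z = if z = orbRep σ z then a.coeff z else 0 := fun z => rfl
  refine ⟨b, MonoidAlgebra.ext (Finsupp.ext fun y => ?_)⟩
  rw [Finset.sum_mul, MonoidAlgebra.coeff_sum, Finsupp.finset_sum_apply]
  have hterm : ∀ i ∈ Finset.range p,
      (MonoidAlgebra.single (σ ^ i) (1:ℤ) * b).coeff y
        = if (σ ^ i)⁻¹ * y = orbRep σ y then a.coeff y else 0 := by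
    intro i _
    rw [MonoidAlgebra.single_mul_apply, one_mul, hbapp]
    have hrep : orbRep σ ((σ ^ i)⁻¹ * y) = orbRep σ y := by
      have : (σ ^ i)⁻¹ = σ ^ (-(i:ℤ)) := by rw [zpow_neg, zpow_natCast]
      rw [this, orbRep_zpow]
    rw [hrep, haiter i y]
  rw [Finset.sum_congr rfl hterm, Finset.sum_eq_single (j y)]
  · rw [if_pos (inv_mul_eq_iff_eq_mul.mpr (hjspec y))]
  · intro i hi hne
    rw [if_neg]
    intro hcon
    refine hne (pow_uniq hσ (Finset.mem_range.mp hi) (hjlt y) ?_)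
    have h1 : y = σ ^ i * orbRep σ y := (inv_mul_eq_iff_eq_mul.mp hcon)
    have h2 := (hjspec y).symm.trans h1
    exact mul_right_cancel h2.symm
  · intro h
    exact absurd (Finset.mem_range.mpr (hjlt y)) h

lemma ringL2 (hp : p.Prime) (hσ : orderOf σ = p)
    (a : MonoidAlgebra ℤ F)
    (hN : (∑ i ∈ Finset.range p, MonoidAlgebra.single (σ ^ i) (1:ℤ)) * a = 0) :
    ∃ b, a = (MonoidAlgebra.single σ (1:ℤ) - 1) * b := by
  classical
  have hNa : ∀ y : F, ∑ i ∈ Finset.range p, a.coeff ((σ ^ i)⁻¹ * y) = 0 := by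
    intro y
    have h := Finsupp.ext_iff.mp (MonoidAlgebra.coeff_inj.mpr hN) y
    rw [Finset.sum_mul, MonoidAlgebra.coeff_sum, Finsupp.finset_sum_apply] at h
    simpa [MonoidAlgebra.single_mul_apply] using h
  have horb : ∀ y : F, ∑ i ∈ Finset.range p, a.coeff (σ ^ i * y) = 0 := by
    intro y
    calc ∑ i ∈ Finset.range p, a.coeff (σ ^ i * y)
        = ∑ i ∈ Finset.range p, a.coeff (σ ^ (p - 1 - i) * y) :=
          (Finset.sum_range_reflect (fun i => a.coeff (σ ^ i * y)) p).symm
      _ = ∑ i ∈ Finset.range p, a.coeff ((σ ^ i)⁻¹ * (σ ^ (p-1) * y)) := by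
          refine Finset.sum_congr rfl fun i hi => ?_
          congr 1
          rw [← mul_assoc]
          congr 1
          rw [eq_inv_mul_iff_mul_eq, ← pow_add]
          congr 1
          have := Finset.mem_range.mp hi
          omega
      _ = 0 := hNa _
  choose j hjlt hjspec using orb_exists hp hσ (σ := σ)
  have juniq : ∀ (x : F) (k : ℕ), k < p → x = σ ^ k * orbRep σ x → j x = k := by
    intro x k hk hxk
    refine pow_uniq hσ (hjlt x) hk ?_
    have := (hjspec x).symm.trans hxk
    exact mul_right_cancel this
  set b : MonoidAlgebra ℤ F :=
    MonoidAlgebra.ofCoeff (Finsupp.equivFunOnFinite.symm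
      (fun x => ∑ i ∈ Finset.Ico (j x + 1) p, a.coeff (σ ^ i * orbRep σ x))) with hb
  have hbapp : ∀ z, b.coeff z = ∑ i ∈ Finset.Ico (j z + 1) p, a.coeff (σ ^ i * orbRep σ z) :=
    fun z => rfl
  refine ⟨b, MonoidAlgebra.ext (Finsupp.ext fun y => ?_)⟩
  rw [sub_mul, one_mul, MonoidAlgebra.coeff_sub, Finsupp.sub_apply, MonoidAlgebra.single_mul_apply, one_mul]
  have hrep : orbRep σ (σ⁻¹ * y) = orbRep σ y := by
    have : σ⁻¹ = σ ^ (-1 : ℤ) := by rw [zpow_neg, zpow_one]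
    rw [this, orbRep_zpow]
  have hppos := hp.pos
  have hjy := hjlt y
  have hpow1 : σ ^ (p - 1) * σ = 1 := by
    rw [← pow_succ]
    have : p - 1 + 1 = p := by omega
    rw [this, ← hσ, pow_orderOf_eq_one]
  by_cases h0 : j y = 0
  · -- y is the representative
    have hy : y = orbRep σ y := by
      have := hjspec y
      rwa [h0, pow_zero, one_mul] at this
    have h1 : σ⁻¹ * y = σ ^ (p - 1) * orbRep σ (σ⁻¹ * y) := by
      rw [hrep, ← hy]
      congr 1
      exact (eq_inv_of_mul_eq_one_left hpow1).symm
    have hj1 : j (σ⁻¹ * y) = p - 1 := juniq _ (p - 1) (by omega) h1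
    have hb1 : b.coeff (σ⁻¹ * y) = 0 := by
      rw [hbapp, hj1]
      have : p - 1 + 1 = p := by omega
      rw [this, Finset.Ico_self, Finset.sum_empty]
    have hb2 : b.coeff y = ∑ i ∈ Finset.Ico 1 p, a.coeff (σ ^ i * orbRep σ y) := by
      rw [hbapp, h0]
    have hsum := horb (orbRep σ y)
    rw [Finset.range_eq_Ico, Finset.sum_eq_sum_Ico_succ_bot hp.pos] at hsum
    rw [pow_zero, one_mul, ← hy] at hsum
    rw [hb1, hb2, ← hy]
    simp only [zero_add] at hsum
    omega
  · have h1 : σ⁻¹ * y = σ ^ (j y - 1) * orbRep σ (σ⁻¹ * y) := by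
      rw [hrep]
      have hyy := hjspec y
      have hsplit : j y = (j y - 1) + 1 := by omega
      have hstep : σ ^ (j y) = σ * σ ^ (j y - 1) := by
        conv_lhs => rw [hsplit]
        rw [pow_succ']
      conv_lhs => rw [hyy, hstep]
      group
    have hj1 : j (σ⁻¹ * y) = j y - 1 := juniq _ (j y - 1) (by omega) h1
    have hb1 : b.coeff (σ⁻¹ * y) = ∑ i ∈ Finset.Ico (j y) p, a.coeff (σ ^ i * orbRep σ y) := by
      rw [hbapp, hj1, hrep]
      congr 2
      omega
    rw [hb1, hbapp, Finset.sum_eq_sum_Ico_succ_bot (hjlt y)]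
    have : a.coeff (σ ^ (j y) * orbRep σ y) = a.coeff y := by rw [← hjspec y]
    rw [this]
    ring

end GroupRing

section Main

lemma isAcyc_of_hasProjResLen {R : Type} [Ring R] {t N : R} (htN : t * N = 0) (hNt : N * t = 0)
    (hR1 : ∀ a : R, t * a = 0 → ∃ b, a = N * b)
    (hR2 : ∀ a : R, N * a = 0 → ∃ b, a = t * b) :
    ∀ (n : ℕ) (M : Type) [AddCommGroup M] [Module R M], HasProjResLen R n M → IsAcyc t N M := by
  intro n
  induction n with
  | zero =>
    intro M _ _ h
    exact isAcyc_of_projective t N hR1 hR2 M h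
  | succ n ih =>
    intro M _ _ h
    obtain ⟨P, hP, f, hf, hres⟩ := h
    exact isAcyc_of_surjective htN hNt f hf (isAcyc_of_projective t N hR1 hR2 P hP)
      (ih _ hres)

end Main

/-- If `F` is a nontrivial finite group, then the trivial `ℤF`-module `ℤ` does not admit a
finite-length resolution by projective `ℤF`-modules; equivalently, `F` has infinite
cohomological dimension over `ℤ`. -/
theorem trivial_module_no_finite_projective_resolution (F : Type) [Group F] [Finite F]
    (hF : Nontrivial F) :
    ¬ ∃ n, HasProjResLen (MonoidAlgebra ℤ F) n (TrivZ F) := by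
  classical
  cases nonempty_fintype F
  rintro ⟨n, hres⟩
  have hcard : 1 < Fintype.card F := Fintype.one_lt_card
  set p := (Fintype.card F).minFac with hpdef
  have hp : p.Prime := Nat.minFac_prime (by omega)
  haveI : Fact p.Prime := ⟨hp⟩
  obtain ⟨σ, hσ⟩ := exists_prime_orderOf_dvd_card p ((Fintype.card F).minFac_dvd)
  set R := MonoidAlgebra ℤ F with hR
  set t : R := MonoidAlgebra.single σ (1:ℤ) - 1 with htdef
  set N : R := ∑ i ∈ Finset.range p, MonoidAlgebra.single (σ ^ i) (1:ℤ) with hNdef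
  have hgeom : ∀ i : ℕ,
      MonoidAlgebra.single (σ ^ i) (1:ℤ) = (MonoidAlgebra.single σ (1:ℤ)) ^ i := by
    intro i
    rw [MonoidAlgebra.single_pow, one_pow]
  have hXp : (MonoidAlgebra.single σ (1:ℤ)) ^ p = 1 := by
    rw [MonoidAlgebra.single_pow, one_pow, ← hσ, pow_orderOf_eq_one, MonoidAlgebra.one_def]
  have hNt : N * t = 0 := by
    rw [hNdef, htdef]
    simp_rw [hgeom]
    rw [geom_sum_mul, hXp, sub_self]
  have htN : t * N = 0 := by
    rw [hNdef, htdef]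
    simp_rw [hgeom]
    rw [mul_geom_sum, hXp, sub_self]
  have hac : IsAcyc t N (TrivZ F) :=
    isAcyc_of_hasProjResLen htN hNt (fun a h => ringL1 hp hσ a h)
      (fun a h => ringL2 hp hσ a h) n (TrivZ F) hres
  set ε : R →+* ℤ := ((MonoidAlgebra.lift ℤ ℤ F) 1).toRingHom with hε
  have hsmul : ∀ (c : R) (m : ℤ), (show ℤ from c • (show TrivZ F from m)) = ε c * m :=
    fun _ _ => rfl
  have hεt : ε t = 0 := by
    rw [htdef, map_sub, map_one]
    have h : ε (MonoidAlgebra.single σ (1:ℤ)) = 1 := by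
      show ((MonoidAlgebra.lift ℤ ℤ F) 1) (MonoidAlgebra.single σ 1) = 1
      rw [MonoidAlgebra.lift_single]
      simp
    rw [h, sub_self]
  have hεN : ε N = p := by
    rw [hNdef, map_sum]
    have h : ∀ i ∈ Finset.range p, ε (MonoidAlgebra.single (σ ^ i) (1:ℤ)) = 1 := by
      intro i _
      show ((MonoidAlgebra.lift ℤ ℤ F) 1) (MonoidAlgebra.single (σ ^ i) 1) = 1
      rw [MonoidAlgebra.lift_single]
      simp
    rw [Finset.sum_congr rfl h, Finset.sum_const, Finset.card_range, nsmul_eq_mul, mul_one]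
  have h1 : t • (show TrivZ F from (1:ℤ)) = 0 := by
    have h := hsmul t 1
    rw [hεt, zero_mul] at h
    exact h
  obtain ⟨y, hy⟩ := hac.1 _ h1
  have hy' : (1:ℤ) = ε N * (show ℤ from y) := hy.trans (hsmul N (show ℤ from y))
  rw [hεN] at hy'
  have hdvd : (p:ℤ) ∣ 1 := ⟨show ℤ from y, hy'⟩
  have hle := Int.le_of_dvd one_pos hdvd
  have := hp.two_le
  omega
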